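/- Let A be a k×r integer matrix and B = {b₁,...,bₙ} a generating set of the integral kernel of A such that the ideal I_B = (x^{b⁺} - x^{b⁻} : b ∈ B) ⊆ ℤ[x₁,...,x_r] is saturated with respect to x₁⋯x_r. Then for every u ∈ ℕ^r the graph on the fibre F(u) = {v ∈ ℕ^r : Av = Au}, with an edge between distinct v₁, v₂ iff v₁ - v₂ ∈ B ∪ (-B), is connected. -/

import Mathlib

/-! Moves `v ↦ v ± b` commute with translation, so connectivity by moves is an additive
congruence `~` on `ℕ^r`, and `x^d ↦ [d]` induces a ring map `ℤ[x] → ℤ[ℕ^r / ~]` that kills every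
generator `x^{b⁺} - x^{b⁻}`, hence all of `I_B`. If `v, w` lie in one fibre, then `v - w ∈ ker A`
is an integer combination of `B`, which yields `a, b` with `a - b = v - w` and
`x^a - x^b ∈ I_B`. Now `(x^v - x^w) x^b = x^w (x^a - x^b) ∈ I_B`, so saturation gives
`x^v - x^w ∈ I_B`; its image `[v] - [w]` vanishes, i.e. `v ~ w`. Moves never leave the fibre
because `B ⊆ ker A`. -/
open MvPolynomial

noncomputable def xpow {r : ℕ} (d : Fin r → ℕ) : MvPolynomial (Fin r) ℤ :=
  ∏ j, X j ^ d j

def posPart {r : ℕ} (b : Fin r → ℤ) : Fin r → ℕ := fun j => (b j).toNat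
def negPart {r : ℕ} (b : Fin r → ℤ) : Fin r → ℕ := fun j => (-(b j)).toNat

namespace AddMonoidAlgebra

theorem eq_of_single_sub_single_mem_span {R M N ι : Type*} [Ring R] [Nontrivial R]
    [AddMonoid M] [AddMonoid N] (f : M →+ N) {B : Set ι} {p q : ι → M}
    (hf : ∀ b ∈ B, f (p b) = f (q b)) {v w : M}
    (h : single v (1 : R) - single w 1 ∈
      Ideal.span ((fun b => single (p b) (1 : R) - single (q b) 1) '' B)) :
    f v = f w := by
  have map_binomial (x y : M) : mapDomainRingHom R f (single x 1 - single y 1) =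
      single (f x) 1 - single (f y) 1 := by
    simp only [map_sub, mapDomainRingHom_apply, mapDomain_single]
  have hker : Ideal.span ((fun b => single (p b) (1 : R) - single (q b) 1) '' B) ≤
      RingHom.ker (mapDomainRingHom R f) := by
    rw [Ideal.span_le]
    rintro _ ⟨b, hb, rfl⟩
    rw [SetLike.mem_coe, RingHom.mem_ker, map_binomial, hf b hb, sub_self]
  have hvw := hker h
  rw [RingHom.mem_ker, map_binomial, sub_eq_zero] at hvw
  exact single_left_injective one_ne_zero hvw

end AddMonoidAlgebra

theorem Relation.ReflTransGen.restrict_invariant {α : Type*} {r : α → α → Prop} {P : α → Prop}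
    (hP : ∀ x y, r x y → P x → P y) {a b : α} (h : ReflTransGen r a b) (ha : P a) :
    ReflTransGen (fun x y => P x ∧ P y ∧ x ≠ y ∧ r x y) a b := by
  suffices P b ∧ ReflTransGen (fun x y => P x ∧ P y ∧ x ≠ y ∧ r x y) a b from this.2
  induction h with
  | refl => exact ⟨ha, .refl⟩
  | @tail x y _ hxy ih =>
    obtain ⟨hx, hax⟩ := ih
    have hy := hP x y hxy hx
    refine ⟨hy, ?_⟩
    obtain rfl | hne := eq_or_ne x y
    · exact hax
    · exact hax.tail ⟨hx, hy, hne, hxy⟩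

section xpow

variable {r : ℕ}

theorem xpow_eq_monomial (d : Fin r → ℕ) :
    xpow d = monomial (Finsupp.equivFunOnFinite.symm d) 1 := by
  rw [monomial_eq, C_1, one_mul, Finsupp.prod_fintype _ _ (fun _ => pow_zero _)]
  rfl

theorem xpow_add (d e : Fin r → ℕ) : xpow (d + e) = xpow d * xpow e := by
  simp only [xpow, Pi.add_apply, pow_add, Finset.prod_mul_distrib]

theorem xpow_dvd_prod_X_pow {d : Fin r → ℕ} {m : ℕ} (hd : ∀ j, d j ≤ m) :
    xpow d ∣ (∏ j, X j) ^ m := by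
  rw [← Finset.prod_pow]
  exact Finset.prod_dvd_prod_of_dvd _ _ fun j _ => pow_dvd_pow _ (hd j)

theorem mem_of_mul_xpow_mem {I : Ideal (MvPolynomial (Fin r) ℤ)}
    (hsat : {a | ∃ m : ℕ, 0 < m ∧ a * (∏ j, X j) ^ m ∈ I} ⊆ I) {p : MvPolynomial (Fin r) ℤ}
    {d : Fin r → ℕ} (h : p * xpow d ∈ I) : p ∈ I := by
  refine hsat ⟨∑ j, d j + 1, Nat.succ_pos _, ?_⟩
  obtain ⟨c, hc⟩ := xpow_dvd_prod_X_pow fun j =>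
    (Finset.single_le_sum (fun i _ => Nat.zero_le (d i)) (Finset.mem_univ j)).trans
      (Nat.le_succ _)
  rw [hc, ← mul_assoc]
  exact I.mul_mem_right c h

end xpow

noncomputable def binomialIdeal {r : ℕ} (B : Set (Fin r → ℤ)) : Ideal (MvPolynomial (Fin r) ℤ) :=
  Ideal.span ((fun b => xpow (posPart b) - xpow (negPart b)) '' B)

theorem exists_xpow_sub_xpow_mem_binomialIdeal {r : ℕ} {B : Set (Fin r → ℤ)} {z : Fin r → ℤ}
    (hz : z ∈ AddSubgroup.closure B) :
    ∃ a b : Fin r → ℕ, (fun j => (a j : ℤ) - b j) = z ∧ xpow a - xpow b ∈ binomialIdeal B := by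
  induction hz using AddSubgroup.closure_induction with
  | mem z hz =>
    refine ⟨posPart z, negPart z, funext fun j => ?_, Ideal.subset_span ⟨z, hz, rfl⟩⟩
    simp only [_root_.posPart, _root_.negPart]
    omega
  | zero => exact ⟨0, 0, by ext; simp, by simp⟩
  | add z z' _ _ ih ih' =>
    obtain ⟨a, b, rfl, hab⟩ := ih
    obtain ⟨a', b', rfl, hab'⟩ := ih'
    refine ⟨a + a', b + b', funext fun j => ?_, ?_⟩
    · simp only [Pi.add_apply]; push_cast; ring
    · have key : xpow (a + a') - xpow (b + b') =
          xpow a' * (xpow a - xpow b) + xpow b * (xpow a' - xpow b') := by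
        rw [xpow_add, xpow_add]; ring
      rw [key]
      exact add_mem (Ideal.mul_mem_left _ _ hab) (Ideal.mul_mem_left _ _ hab')
  | neg z _ ih =>
    obtain ⟨a, b, rfl, hab⟩ := ih
    refine ⟨b, a, funext fun j => ?_, ?_⟩
    · simp only [Pi.neg_apply]; ring
    · rw [← neg_sub]; exact neg_mem hab

section Moves

variable {ι : Type*} (B : Set (ι → ℤ))

def IsMove (v w : ι → ℕ) : Prop :=
  ∃ b ∈ B, (fun i => (v i : ℤ) - (w i : ℤ)) = b ∨ (fun i => (v i : ℤ) - (w i : ℤ)) = -b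

variable {B}

theorem IsMove.symm {v w : ι → ℕ} (h : IsMove B v w) : IsMove B w v := by
  obtain ⟨b, hb, e | e⟩ := h
  · exact ⟨b, hb, .inr (by rw [← e]; ext; simp)⟩
  · exact ⟨b, hb, .inl (by rw [← neg_neg b, ← e]; ext; simp)⟩

instance : Std.Symm (IsMove B) := ⟨fun _ _ => IsMove.symm⟩

theorem IsMove.add_right {v w : ι → ℕ} (h : IsMove B v w) (d : ι → ℕ) :
    IsMove B (v + d) (w + d) := by
  have e : (fun i => ((v + d) i : ℤ) - (w + d) i) = fun i => (v i : ℤ) - w i := by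
    funext i; simp only [Pi.add_apply]; push_cast; ring
  rwa [IsMove, e]

theorem IsMove.add_left {v w : ι → ℕ} (h : IsMove B v w) (d : ι → ℕ) :
    IsMove B (d + v) (d + w) := by
  rw [add_comm d, add_comm d]
  exact h.add_right d

theorem IsMove.mulVec_eq [Fintype ι] {k : ℕ} {A : Matrix (Fin k) ι ℤ}
    (hker : ∀ b ∈ B, A.mulVec b = 0) {v w : ι → ℕ} (h : IsMove B v w) :
    A.mulVec (fun i => (v i : ℤ)) = A.mulVec (fun i => (w i : ℤ)) := by
  have hdiff : A.mulVec (fun i => (v i : ℤ) - w i) = 0 := by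
    obtain ⟨b, hb, e | e⟩ := h
    · rw [e, hker b hb]
    · rw [e, Matrix.mulVec_neg, hker b hb, neg_zero]
  rwa [← sub_eq_zero, ← Matrix.mulVec_sub]

variable (B)

def moveCon : AddCon (ι → ℕ) where
  r := Relation.ReflTransGen (IsMove B)
  iseqv := ⟨fun _ => .refl, symm, .trans⟩
  add' h h' := (h.lift (· + _) fun _ _ hm => hm.add_right _).trans
    (h'.lift (_ + ·) fun _ _ hm => hm.add_left _)

end Moves

theorem isMove_posPart_negPart {r : ℕ} {B : Set (Fin r → ℤ)} {b : Fin r → ℤ} (hb : b ∈ B) :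
    IsMove B (posPart b) (negPart b) :=
  ⟨b, hb, .inl (funext fun j => by simp only [_root_.posPart, _root_.negPart]; omega)⟩

theorem reflTransGen_isMove_of_xpow_sub_xpow_mem {r : ℕ} {B : Set (Fin r → ℤ)}
    {v w : Fin r → ℕ} (h : xpow v - xpow w ∈ binomialIdeal B) :
    Relation.ReflTransGen (IsMove B) v w := by
  simp only [binomialIdeal, xpow_eq_monomial] at h
  exact (moveCon B).eq.mp (AddMonoidAlgebra.eq_of_single_sub_single_mem_span (R := ℤ)
    ((moveCon B).mk'.comp Finsupp.coeFnAddHom)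
    (fun b hb => (moveCon B).eq.mpr (.single (isMove_posPart_negPart hb))) h)

/-- Diaconis–Sturmfels: if `B` generates the integral kernel of `A` and the ideal
`I_B = (x^{b⁺} - x^{b⁻} : b ∈ B)` is saturated with respect to `x₁⋯x_r`, then for
every `u ∈ ℕ^r` the graph on the fibre `F(u)` with edges `v₁ - v₂ ∈ B ∪ (-B)` is
connected. -/
theorem stmt18 (k r : ℕ) (A : Matrix (Fin k) (Fin r) ℤ) (B : Finset (Fin r → ℤ))
    (hker : ∀ b ∈ B, A.mulVec b = 0)
    (hgen : ∀ v : Fin r → ℤ, A.mulVec v = 0 →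
      v ∈ AddSubgroup.closure (B : Set (Fin r → ℤ)))
    (hsat : {a : MvPolynomial (Fin r) ℤ | ∃ m : ℕ, 0 < m ∧ a * (∏ j, X j) ^ m ∈
        Ideal.span ((fun b => xpow (posPart b) - xpow (negPart b)) '' (B : Set (Fin r → ℤ)))}
      = (Ideal.span ((fun b => xpow (posPart b) - xpow (negPart b)) '' (B : Set (Fin r → ℤ)))
          : Set (MvPolynomial (Fin r) ℤ))) :
    ∀ u : Fin r → ℕ,
      let F : Set (Fin r → ℕ) :=
        {v | A.mulVec (fun i => (v i : ℤ)) = A.mulVec (fun i => (u i : ℤ))}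
      let Adj : (Fin r → ℕ) → (Fin r → ℕ) → Prop := fun v w =>
        v ∈ F ∧ w ∈ F ∧ v ≠ w ∧
          ∃ b ∈ B, (fun i => (v i : ℤ) - (w i : ℤ)) = b ∨
            (fun i => (v i : ℤ) - (w i : ℤ)) = -b
      ∀ v ∈ F, ∀ w ∈ F, Relation.ReflTransGen Adj v w := by
  intro u F Adj v hv w hw
  have hvw_ker : A.mulVec (fun i => (v i : ℤ) - w i) = 0 :=
    (Matrix.mulVec_sub A _ _).trans (sub_eq_zero.mpr (hv.trans hw.symm))
  obtain ⟨a, b, hab, hmem⟩ := exists_xpow_sub_xpow_mem_binomialIdeal (hgen _ hvw_ker)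
  have hvb : v + b = w + a := funext fun j => by
    have hj := congrFun hab j
    simp only [Pi.add_apply] at hj ⊢
    omega
  have hbinom : (xpow v - xpow w) * xpow b = xpow w * (xpow a - xpow b) := by
    rw [sub_mul, ← xpow_add, ← xpow_add, hvb, xpow_add, xpow_add, mul_sub]
  have hvw_mem : xpow v - xpow w ∈ binomialIdeal (B : Set (Fin r → ℤ)) :=
    mem_of_mul_xpow_mem hsat.subset (hbinom ▸ Ideal.mul_mem_left _ _ hmem)
  exact (reflTransGen_isMove_of_xpow_sub_xpow_mem hvw_mem).restrict_invariant
    (fun x y hxy hx => (IsMove.mulVec_eq hker hxy).symm.trans hx) hv
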